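/- If P1, P2 ∈ SBrNDC and L ⊆ A, then (Q1 ∥_L Q2)∖A_H ≈_b (R1 ∥_L R2)∖A_H for all Q1, R1 ∈ reach(P1) and Q2, R2 ∈ reach(P2) such that Q1 ∥_L Q2 and R1 ∥_L R2 belong to reach(P1 ∥_L P2), Q1∖A_H ≈_b R1∖A_H, and Q2∖A_H ≈_b R2∖A_H. -/

import Mathlib

/-!
Restricting by `A_H` blocks every high action of `Q1 ∥_L Q2`, so each move of
`(Q1 ∥_L Q2)∖A_H` is a low or τ move of one component, or a low synchronisation
of both, which the corresponding `Ri∖A_H` can match up to branching bisimilarity.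
Hence the pairs `((q1 ∥_L q2)∖A_H, (r1 ∥_L r2)∖A_H)` with `qi∖A_H ≈_b ri∖A_H`
form a branching bisimulation.
-/

namespace SecurityNI

/-- Process terms: `0`, action prefix (`none` = τ, `some a` = observable action),
choice, CSP-style parallel composition with synchronization set, restriction,
hiding, and constants (whose defining equations are given by an environment). -/
inductive Proc (A : Type) (C : Type) : Type where
  | nil : Proc A C
  | pre : Option A → Proc A C → Proc A C
  | choice : Proc A C → Proc A C → Proc A C
  | par : Set A → Proc A C → Proc A C → Proc A C
  | restrict : Proc A C → Set A → Proc A C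
  | hide : Proc A C → Set A → Proc A C
  | const : C → Proc A C

variable {A C : Type}

/-- A process term is guarded when every constant occurrence is in the scope
of an action prefix operator. -/
def Guarded : Proc A C → Prop
  | .nil => True
  | .pre _ _ => True
  | .choice p q => Guarded p ∧ Guarded q
  | .par _ p q => Guarded p ∧ Guarded q
  | .restrict p _ => Guarded p
  | .hide p _ => Guarded p
  | .const _ => False

/-- Operational semantics, parameterized by the defining equations `env` of
the constants.  Labels are `Option A`, with `none` playing the role of τ. -/
inductive Trans (env : C → Proc A C) : Proc A C → Option A → Proc A C → Prop where
  | pre (a : Option A) (p : Proc A C) : Trans env (.pre a p) a p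
  | choiceL {p q a p'} (h : Trans env p a p') : Trans env (.choice p q) a p'
  | choiceR {p q a q'} (h : Trans env q a q') : Trans env (.choice p q) a q'
  | parL {L p q a p'} (h : Trans env p a p') (hn : ∀ x, a = some x → x ∉ L) :
      Trans env (.par L p q) a (.par L p' q)
  | parR {L p q a q'} (h : Trans env q a q') (hn : ∀ x, a = some x → x ∉ L) :
      Trans env (.par L p q) a (.par L p q')
  | sync {L p q x p' q'} (h1 : Trans env p (some x) p') (h2 : Trans env q (some x) q')
      (hx : x ∈ L) : Trans env (.par L p q) (some x) (.par L p' q')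
  | res {p a p' L} (h : Trans env p a p') (hn : ∀ x, a = some x → x ∉ L) :
      Trans env (.restrict p L) a (.restrict p' L)
  | hideIn {p x p' L} (h : Trans env p (some x) p') (hx : x ∈ L) :
      Trans env (.hide p L) none (.hide p' L)
  | hideOut {p a p' L} (h : Trans env p a p') (hn : ∀ x, a = some x → x ∉ L) :
      Trans env (.hide p L) a (.hide p' L)
  | const {c a p'} (h : Trans env (env c) a p') : Trans env (.const c) a p'

section LTS

variable {S : Type} (tr : S → Option A → S → Prop)

/-- Finitely many (possibly zero) τ-transitions. -/
def TauStar : S → S → Prop :=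
  Relation.ReflTransGen (fun s s' => tr s none s')

/-- `B` is a branching bisimulation. -/
def IsBranchingBisim (B : S → S → Prop) : Prop :=
  Symmetric B ∧
    ∀ s1 s2, B s1 s2 → ∀ a s1', tr s1 a s1' →
      (a = none ∧ B s1' s2) ∨
      (∃ s2b s2', TauStar tr s2 s2b ∧ tr s2b a s2' ∧ B s1 s2b ∧ B s1' s2')

/-- Branching bisimilarity `≈_b`. -/
def BrBisim (s1 s2 : S) : Prop :=
  ∃ B, IsBranchingBisim tr B ∧ B s1 s2

/-- `B` is a weak bisimulation. -/
def IsWeakBisim (B : S → S → Prop) : Prop :=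
  Symmetric B ∧
    ∀ s1 s2, B s1 s2 →
      (∀ s1', tr s1 none s1' → ∃ s2', TauStar tr s2 s2' ∧ B s1' s2') ∧
      (∀ x s1', tr s1 (some x) s1' →
        ∃ t t' s2', TauStar tr s2 t ∧ tr t (some x) t' ∧ TauStar tr t' s2' ∧ B s1' s2')

/-- Weak bisimilarity `≈`. -/
def WeakBisim (s1 s2 : S) : Prop :=
  ∃ B, IsWeakBisim tr B ∧ B s1 s2

/-- Reachability via finitely many transitions. -/
def Reach : S → S → Prop :=
  Relation.ReflTransGen (fun s s' => ∃ a, tr s a s')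

end LTS

section Security

variable (env : C → Proc A C) (AH : Set A)

/-- `P ∈ BrSNNI` iff `P∖A_H ≈_b P/A_H`. -/
def BrSNNI (p : Proc A C) : Prop :=
  BrBisim (Trans env) (.restrict p AH) (.hide p AH)

/-- All processes reachable from `q` perform only actions in `AH`. -/
def HighOnly (q : Proc A C) : Prop :=
  ∀ q', Reach (Trans env) q q' → ∀ a q'', Trans env q' a q'' → ∃ h ∈ AH, a = some h

/-- `P ∈ BrNDC` iff `P∖A_H ≈_b ((P ∥_L Q)/L)∖A_H` for every high-level `Q`
and every `L ⊆ A_H`. -/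
def BrNDC (p : Proc A C) : Prop :=
  ∀ q, HighOnly env AH q → ∀ L, L ⊆ AH →
    BrBisim (Trans env) (.restrict p AH) (.restrict (.hide (.par L p q) L) AH)

/-- `P ∈ SBrSNNI` iff every reachable process is BrSNNI. -/
def SBrSNNI (p : Proc A C) : Prop :=
  ∀ p', Reach (Trans env) p p' → BrSNNI env AH p'

/-- `P ∈ P_BrNDC` iff every reachable process is BrNDC. -/
def PBrNDC (p : Proc A C) : Prop :=
  ∀ p', Reach (Trans env) p p' → BrNDC env AH p'

/-- `P ∈ SBrNDC` iff for every reachable `P'` and every high transition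
`P' --h→ P''`, `P'∖A_H ≈_b P''∖A_H`. -/
def SBrNDC (p : Proc A C) : Prop :=
  ∀ p' p'', Reach (Trans env) p p' → ∀ h ∈ AH, Trans env p' (some h) p'' →
    BrBisim (Trans env) (.restrict p' AH) (.restrict p'' AH)

/-- `P ∈ BSNNI` iff `P∖A_H ≈ P/A_H`. -/
def BSNNI (p : Proc A C) : Prop :=
  WeakBisim (Trans env) (.restrict p AH) (.hide p AH)

/-- `P ∈ BNDC` iff `P∖A_H ≈ ((P ∥_L Q)/L)∖A_H` for every high-level `Q`
and every `L ⊆ A_H`. -/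
def BNDC (p : Proc A C) : Prop :=
  ∀ q, HighOnly env AH q → ∀ L, L ⊆ AH →
    WeakBisim (Trans env) (.restrict p AH) (.restrict (.hide (.par L p q) L) AH)

/-- `P ∈ SBSNNI` iff every reachable process is BSNNI. -/
def SBSNNI (p : Proc A C) : Prop :=
  ∀ p', Reach (Trans env) p p' → BSNNI env AH p'

/-- `P ∈ P_BNDC` iff every reachable process is BNDC. -/
def PBNDC (p : Proc A C) : Prop :=
  ∀ p', Reach (Trans env) p p' → BNDC env AH p'

/-- `P ∈ SBNDC` iff for every reachable `P'` and every high transition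
`P' --h→ P''`, `P'∖A_H ≈ P''∖A_H`. -/
def SBNDC (p : Proc A C) : Prop :=
  ∀ p' p'', Reach (Trans env) p p' → ∀ h ∈ AH, Trans env p' (some h) p'' →
    WeakBisim (Trans env) (.restrict p' AH) (.restrict p'' AH)

/-- No high-level actions occur in `p`: no process reachable from `p`
can perform a high-level action. -/
def NoHigh (p : Proc A C) : Prop :=
  ∀ p', Reach (Trans env) p p' → ∀ h ∈ AH, ∀ p'', ¬ Trans env p' (some h) p''

end Security

section BranchingBisimilarity

variable {S : Type} {tr : S → Option A → S → Prop}

theorem BrBisim.symm {s t : S} (h : BrBisim tr s t) : BrBisim tr t s :=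
  let ⟨B, hB, hst⟩ := h
  ⟨B, hB, hB.1 hst⟩

theorem isBranchingBisim_brBisim : IsBranchingBisim tr (BrBisim tr) := by
  refine ⟨fun _ _ => BrBisim.symm, ?_⟩
  rintro s t ⟨B, hB, hst⟩ a s' hs
  rcases hB.2 s t hst a s' hs with ⟨ha, h'⟩ | ⟨tb, t', htb, ht', hsb, hs'⟩
  · exact Or.inl ⟨ha, B, hB, h'⟩
  · exact Or.inr ⟨tb, t', htb, ht', ⟨B, hB, hsb⟩, ⟨B, hB, hs'⟩⟩

end BranchingBisimilarity

section Restriction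

variable {env : C → Proc A C} {AH : Set A}

theorem Trans.restrict_inv {p s : Proc A C} {a : Option A}
    (h : Trans env (.restrict p AH) a s) :
    ∃ p', s = .restrict p' AH ∧ Trans env p a p' ∧ ∀ x, a = some x → x ∉ AH := by
  cases h with
  | res h hn => exact ⟨_, rfl, h, hn⟩

theorem TauStar.restrict_inv {p s : Proc A C} (h : TauStar (Trans env) (.restrict p AH) s) :
    ∃ p', s = .restrict p' AH ∧ TauStar (Trans env) p p' := by
  induction h with
  | refl => exact ⟨p, rfl, .refl⟩
  | tail _ hstep ih =>
    obtain ⟨p', rfl, hpp'⟩ := ih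
    obtain ⟨p'', rfl, hstep', -⟩ := Trans.restrict_inv hstep
    exact ⟨p'', rfl, hpp'.tail hstep'⟩

theorem TauStar.restrict_par_left {L : Set A} {p p' : Proc A C} (q : Proc A C)
    (h : TauStar (Trans env) p p') :
    TauStar (Trans env) (.restrict (.par L p q) AH) (.restrict (.par L p' q) AH) :=
  Relation.ReflTransGen.lift (p := fun s s' => Trans env s none s')
    (fun p => Proc.restrict (.par L p q) AH)
    (fun _ _ hstep => Trans.res (.parL hstep nofun) nofun) _ _ h

theorem TauStar.restrict_par_right {L : Set A} (p : Proc A C) {q q' : Proc A C}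
    (h : TauStar (Trans env) q q') :
    TauStar (Trans env) (.restrict (.par L p q) AH) (.restrict (.par L p q') AH) :=
  Relation.ReflTransGen.lift (p := fun s s' => Trans env s none s')
    (fun q => Proc.restrict (.par L p q) AH)
    (fun _ _ hstep => Trans.res (.parR hstep nofun) nofun) _ _ h

theorem BrBisim.restrict_step {q r q' : Proc A C} {a : Option A}
    (h : BrBisim (Trans env) (.restrict q AH) (.restrict r AH))
    (hq : Trans env q a q') (ha : ∀ x, a = some x → x ∉ AH) :
    (a = none ∧ BrBisim (Trans env) (.restrict q' AH) (.restrict r AH)) ∨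
    ∃ rb r', TauStar (Trans env) r rb ∧ Trans env rb a r' ∧
      BrBisim (Trans env) (.restrict q AH) (.restrict rb AH) ∧
      BrBisim (Trans env) (.restrict q' AH) (.restrict r' AH) := by
  rcases isBranchingBisim_brBisim.2 _ _ h a _ (.res hq ha) with
    h' | ⟨tb, t', htb, ht', hb, hb'⟩
  · exact Or.inl h'
  · obtain ⟨rb, rfl, hrb⟩ := TauStar.restrict_inv htb
    obtain ⟨r', rfl, hr', -⟩ := Trans.restrict_inv ht'
    exact Or.inr ⟨rb, r', hrb, hr', hb, hb'⟩

end Restriction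

section Congruence

variable {env : C → Proc A C} {AH L : Set A}

def ParRestrictRel (env : C → Proc A C) (AH L : Set A) (s t : Proc A C) : Prop :=
  ∃ q1 q2 r1 r2, s = .restrict (.par L q1 q2) AH ∧ t = .restrict (.par L r1 r2) AH ∧
    BrBisim (Trans env) (.restrict q1 AH) (.restrict r1 AH) ∧
    BrBisim (Trans env) (.restrict q2 AH) (.restrict r2 AH)

theorem ParRestrictRel.transfer {q1 q2 r1 r2 s' : Proc A C} {a : Option A}
    (hb1 : BrBisim (Trans env) (.restrict q1 AH) (.restrict r1 AH))
    (hb2 : BrBisim (Trans env) (.restrict q2 AH) (.restrict r2 AH))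
    (hs : Trans env (.restrict (.par L q1 q2) AH) a s') :
    (a = none ∧ ParRestrictRel env AH L s' (.restrict (.par L r1 r2) AH)) ∨
    ∃ tb t', TauStar (Trans env) (.restrict (.par L r1 r2) AH) tb ∧ Trans env tb a t' ∧
      ParRestrictRel env AH L (.restrict (.par L q1 q2) AH) tb ∧
      ParRestrictRel env AH L s' t' := by
  obtain ⟨p', rfl, hpar, ha⟩ := Trans.restrict_inv hs
  cases hpar with
  | @parL _ _ _ _ q1' hq hnL =>
    rcases hb1.restrict_step hq ha with ⟨rfl, hb1'⟩ | ⟨r1b, r1', hr1b, hr1', hb1b, hb1'⟩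
    · exact Or.inl ⟨rfl, q1', q2, r1, r2, rfl, rfl, hb1', hb2⟩
    · exact Or.inr ⟨_, _, hr1b.restrict_par_left r2, .res (.parL hr1' hnL) ha,
        ⟨q1, q2, r1b, r2, rfl, rfl, hb1b, hb2⟩, ⟨q1', q2, r1', r2, rfl, rfl, hb1', hb2⟩⟩
  | @parR _ _ _ _ q2' hq hnL =>
    rcases hb2.restrict_step hq ha with ⟨rfl, hb2'⟩ | ⟨r2b, r2', hr2b, hr2', hb2b, hb2'⟩
    · exact Or.inl ⟨rfl, q1, q2', r1, r2, rfl, rfl, hb1, hb2'⟩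
    · exact Or.inr ⟨_, _, hr2b.restrict_par_right r1, .res (.parR hr2' hnL) ha,
        ⟨q1, q2, r1, r2b, rfl, rfl, hb1, hb2b⟩, ⟨q1, q2', r1, r2', rfl, rfl, hb1, hb2'⟩⟩
  | @sync _ _ _ _ q1' q2' hq1 hq2 hxL =>
    -- a visible action cannot be matched by staying put, so both components really move
    obtain ⟨⟨⟩, -⟩ | ⟨r1b, r1', hr1b, hr1', hb1b, hb1'⟩ := hb1.restrict_step hq1 ha
    obtain ⟨⟨⟩, -⟩ | ⟨r2b, r2', hr2b, hr2', hb2b, hb2'⟩ := hb2.restrict_step hq2 ha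
    exact Or.inr ⟨_, _, (hr1b.restrict_par_left r2).trans (hr2b.restrict_par_right r1b),
      .res (.sync hr1' hr2' hxL) ha,
      ⟨q1, q2, r1b, r2b, rfl, rfl, hb1b, hb2b⟩, ⟨q1', q2', r1', r2', rfl, rfl, hb1', hb2'⟩⟩

theorem isBranchingBisim_parRestrictRel :
    IsBranchingBisim (Trans env) (ParRestrictRel env AH L) := by
  constructor
  · rintro s t ⟨q1, q2, r1, r2, rfl, rfl, hb1, hb2⟩
    exact ⟨r1, r2, q1, q2, rfl, rfl, hb1.symm, hb2.symm⟩
  · rintro s t ⟨q1, q2, r1, r2, rfl, rfl, hb1, hb2⟩ a s' hs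
    exact ParRestrictRel.transfer hb1 hb2 hs

theorem BrBisim.restrict_par {q1 q2 r1 r2 : Proc A C}
    (hb1 : BrBisim (Trans env) (.restrict q1 AH) (.restrict r1 AH))
    (hb2 : BrBisim (Trans env) (.restrict q2 AH) (.restrict r2 AH)) :
    BrBisim (Trans env) (.restrict (.par L q1 q2) AH) (.restrict (.par L r1 r2) AH) :=
  ⟨_, isBranchingBisim_parRestrictRel, q1, q2, r1, r2, rfl, rfl, hb1, hb2⟩

end Congruence

theorem sbrndc_par_restrict_general {A C : Type} (env : C → Proc A C)
    (AH : Set A) (P1 P2 : Proc A C) (L : Set A) :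
    ∀ Q1 R1 Q2 R2 : Proc A C,
      Reach (Trans env) P1 Q1 → Reach (Trans env) P1 R1 →
      Reach (Trans env) P2 Q2 → Reach (Trans env) P2 R2 →
      Reach (Trans env) (Proc.par L P1 P2) (Proc.par L Q1 Q2) →
      Reach (Trans env) (Proc.par L P1 P2) (Proc.par L R1 R2) →
      BrBisim (Trans env) (Proc.restrict Q1 AH) (Proc.restrict R1 AH) →
      BrBisim (Trans env) (Proc.restrict Q2 AH) (Proc.restrict R2 AH) →
      BrBisim (Trans env) (Proc.restrict (Proc.par L Q1 Q2) AH)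
        (Proc.restrict (Proc.par L R1 R2) AH) :=
  fun _ _ _ _ _ _ _ _ _ _ hb1 hb2 => hb1.restrict_par hb2

/-- Lemma 4.3(3). -/
theorem sbrndc_par_restrict {A C : Type} (env : C → Proc A C)
    (hguard : ∀ c, Guarded (env c)) (AH : Set A) (P1 P2 : Proc A C)
    (h1 : SBrNDC env AH P1) (h2 : SBrNDC env AH P2) (L : Set A) :
    ∀ Q1 R1 Q2 R2 : Proc A C,
      Reach (Trans env) P1 Q1 → Reach (Trans env) P1 R1 →
      Reach (Trans env) P2 Q2 → Reach (Trans env) P2 R2 →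
      Reach (Trans env) (Proc.par L P1 P2) (Proc.par L Q1 Q2) →
      Reach (Trans env) (Proc.par L P1 P2) (Proc.par L R1 R2) →
      BrBisim (Trans env) (Proc.restrict Q1 AH) (Proc.restrict R1 AH) →
      BrBisim (Trans env) (Proc.restrict Q2 AH) (Proc.restrict R2 AH) →
      BrBisim (Trans env) (Proc.restrict (Proc.par L Q1 Q2) AH)
        (Proc.restrict (Proc.par L R1 R2) AH) :=
  sbrndc_par_restrict_general env AH P1 P2 L

end SecurityNI
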